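/- Let D ⊆ ℂⁿ be a ℂ-proper convex domain and let ξ ∈ ∂D be a point of locally finite type. Let φ, ψ : 𝔻 → D be complex geodesics with endpoint ξ. Then h_{ξ,φ(0)}(ψ(0)) = log(ψ'_N(1)/φ'_N(1)). In particular, if φ(0) = ψ(0) then φ'_N(1) = ψ'_N(1). -/

import Mathlib

open Filter Topology Metric Set

noncomputable section

/-- `ℂⁿ` as a complex Euclidean space. -/
abbrev En (n : ℕ) := EuclideanSpace ℂ (Fin n)

/-- The open unit disc in `ℂ`. -/
def unitDisc : Set ℂ := Metric.ball 0 1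

/-- The Poincaré distance on the unit disc, normalized as
`ρ(ζ₁,ζ₂) = log((1+m)/(1−m))` with `m = |ζ₁−ζ₂|/|1−conj(ζ₂)ζ₁|`. -/
def poincareDist (ζ₁ ζ₂ : ℂ) : ℝ :=
  Real.log ((1 + ‖ζ₁ - ζ₂‖ / ‖1 - (starRingEnd ℂ) ζ₂ * ζ₁‖) /
    (1 - ‖ζ₁ - ζ₂‖ / ‖1 - (starRingEnd ℂ) ζ₂ * ζ₁‖))

/-- The (one-disc) Kobayashi distance of a (convex) domain `D`. -/
def kob {E : Type*} [NormedAddCommGroup E] [NormedSpace ℂ E] (D : Set E) (z w : E) : ℝ :=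
  sInf { c | ∃ φ : ℂ → E, DifferentiableOn ℂ φ unitDisc ∧ MapsTo φ unitDisc D ∧
    ∃ ζ₁ ∈ unitDisc, ∃ ζ₂ ∈ unitDisc, φ ζ₁ = z ∧ φ ζ₂ = w ∧ c = poincareDist ζ₁ ζ₂ }

/-- A `ℂ`-proper convex domain: nonempty, open, convex, containing no complex affine line. -/
def IsCProperConvex {E : Type*} [NormedAddCommGroup E] [NormedSpace ℂ E] (D : Set E) : Prop :=
  D.Nonempty ∧ IsOpen D ∧ Convex ℝ D ∧ ¬ ∃ z v : E, v ≠ 0 ∧ ∀ ζ : ℂ, z + ζ • v ∈ D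

/-- A complex geodesic of `D`: a holomorphic isometry from the Poincaré disc into `D`. -/
def IsComplexGeodesic {E : Type*} [NormedAddCommGroup E] [NormedSpace ℂ E]
    (D : Set E) (φ : ℂ → E) : Prop :=
  DifferentiableOn ℂ φ unitDisc ∧ MapsTo φ unitDisc D ∧
    ∀ ζ₁ ∈ unitDisc, ∀ ζ₂ ∈ unitDisc, kob D (φ ζ₁) (φ ζ₂) = poincareDist ζ₁ ζ₂

/-- `φ` has endpoint `ξ`: `φ(t) → ξ` as `t → 1⁻` along the real axis. -/
def HasEndpoint {E : Type*} [NormedAddCommGroup E] [NormedSpace ℂ E]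
    (φ : ℂ → E) (ξ : E) : Prop :=
  Tendsto (fun t : ℝ => φ (t : ℂ)) (𝓝[<] (1 : ℝ)) (𝓝 ξ)

/-- The standard Hermitian product `⟨z,w⟩ = Σ_j z_j conj(w_j)` on `ℂⁿ`. -/
def herm {n : ℕ} (z w : En n) : ℂ := ∑ j, z j * (starRingEnd ℂ) (w j)

/-- The Stolz region at `σ ∈ ∂𝔻` with aperture `M`. -/
def stolzAt (σ : ℂ) (M : ℝ) : Set ℂ :=
  {ζ ∈ unitDisc | ‖σ - ζ‖ < M * (1 - ‖ζ‖)}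

/-- Non-tangential (angular) limit of `g` at `σ ∈ ∂𝔻`: limit within every Stolz region. -/
def NTLim {α : Type*} [TopologicalSpace α] (g : ℂ → α) (σ : ℂ) (a : α) : Prop :=
  ∀ M : ℝ, 1 < M → Tendsto g (𝓝[stolzAt σ M] σ) (𝓝 a)

/-- `ξ ∈ ∂D` is a point of locally finite type: near `ξ` the boundary is `C^L`-smooth
(with a `C^L` local defining function with nonvanishing differential) and the order of
vanishing of the defining function along every complex line through a nearby boundary
point is at most `L`. -/
def IsLocallyFiniteType {n : ℕ} (D : Set (En n)) (ξ : En n) : Prop :=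
  ξ ∈ frontier D ∧ ∃ L : ℕ, 2 ≤ L ∧ ∃ U : Set (En n), IsOpen U ∧ ξ ∈ U ∧
    ∃ r : En n → ℝ, ContDiffOn ℝ L r U ∧ (∀ x ∈ U, (x ∈ D ↔ r x < 0)) ∧
      (∀ x ∈ frontier D ∩ U, fderiv ℝ r x ≠ 0) ∧
      (∀ η ∈ frontier D ∩ U, ∀ v : En n, v ≠ 0 →
        ¬ (fun ζ : ℂ => r (η + ζ • v)) =o[𝓝 (0 : ℂ)] fun ζ : ℂ => ‖ζ‖ ^ L)

/-- `nor` is the outer unit normal of the convex domain `D` at `ξ ∈ ∂D`: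
a unit vector whose associated real supporting hyperplane at `ξ` keeps `D` strictly
on its negative side. -/
def IsOuterUnitNormal {n : ℕ} (D : Set (En n)) (ξ nor : En n) : Prop :=
  ‖nor‖ = 1 ∧ ∀ z ∈ D, (herm (z - ξ) nor).re < 0

/-- `Ω` is the pluricomplex Poisson kernel of `D` at `ξ` (with outer unit normal `nor`):
`Ω(z) = −1/φ'_N(1)` for any complex geodesic `φ` with `φ(0) = z` and endpoint `ξ`, where
`φ'_N(1)` is the non-tangential limit of `⟨φ'(ζ), n_ξ⟩` at `1`. -/
def IsPoissonKernel {n : ℕ} (D : Set (En n)) (ξ nor : En n) (Ω : En n → ℝ) : Prop :=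
  ∀ z ∈ D, ∀ φ : ℂ → En n, IsComplexGeodesic D φ → φ 0 = z → HasEndpoint φ ξ →
    ∀ a : ℝ, 0 < a → NTLim (fun ζ => herm (deriv φ ζ) nor) 1 (a : ℂ) → Ω z = -1 / a

/-- `h` is the horofunction of `D` with center `ξ` and base-point `p`:
`h(z) = lim_{w→ξ} [k_D(z,w) − k_D(w,p)]`. -/
def IsHorofunction {n : ℕ} (D : Set (En n)) (ξ p : En n) (h : En n → ℝ) : Prop :=
  ∀ z ∈ D, Tendsto (fun w => kob D z w - kob D w p) (𝓝[D] ξ) (𝓝 (h z))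

/-- Euclidean distance to the boundary of `D`. -/
def deltaD {E : Type*} [NormedAddCommGroup E] [NormedSpace ℂ E] (D : Set E) (z : E) : ℝ :=
  Metric.infDist z (frontier D)

/-!
Let `u(z) = ⟨z - ξ, n_ξ⟩`. Since `D` lies in the half-space `Re u < 0`, Schwarz–Pick applied to
`cayley ∘ u` bounds `k_D(z, w)` below by the Poincaré distance of `u(z), u(w)` in the left
half-plane. If `χ` is a complex geodesic with endpoint `ξ` and `χ'_N(1) = c`, then
`u(χ(t)) ~ -c (1 - t)` as `t → 1⁻`, and `h(z) - h(χ(0))` is the limit of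
`k_D(z, χ(t)) - ρ(0, t)`; comparing with the half-plane gives
`h(z) - h(χ(0)) ≥ log (|u(z)|² / -Re u(z)) - log (2c)`.
For `χ = φ` and `z = ψ(σ)`, where `h(ψ(σ)) = h(ψ(0)) - ρ(0, σ)`, letting `σ → 1⁻` yields
`h(ψ(0)) - h(φ(0)) ≥ log (b / a)`. Exchanging `φ` and `ψ` gives equality, and `h(φ(0)) = 0`.
-/

open ComplexConjugate

lemma mem_unitDisc_iff {ζ : ℂ} : ζ ∈ unitDisc ↔ ‖ζ‖ < 1 := mem_ball_zero_iff

lemma zero_mem_unitDisc : (0 : ℂ) ∈ unitDisc := mem_unitDisc_iff.2 (by simp)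

lemma ofReal_mem_unitDisc {t : ℝ} (h₀ : -1 < t) (h₁ : t < 1) : (t : ℂ) ∈ unitDisc := by
  rw [mem_unitDisc_iff, Complex.norm_real, Real.norm_eq_abs, abs_lt]
  exact ⟨h₀, h₁⟩

/-! ### The Poincaré distance and the Schwarz–Pick lemma -/

def mobius (c z : ℂ) : ℂ := (z - c) / (1 - conj c * z)

lemma normSq_one_sub_conj_mul_sub_normSq_sub (c z : ℂ) :
    Complex.normSq (1 - conj c * z) - Complex.normSq (z - c) =
      (1 - Complex.normSq c) * (1 - Complex.normSq z) := by
  simp only [Complex.normSq_apply, Complex.sub_re, Complex.sub_im, Complex.mul_re,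
    Complex.mul_im, Complex.one_re, Complex.one_im, Complex.conj_re, Complex.conj_im]
  ring

lemma norm_sub_lt_norm_one_sub_conj_mul {c z : ℂ} (hc : c ∈ unitDisc) (hz : z ∈ unitDisc) :
    ‖z - c‖ < ‖1 - conj c * z‖ := by
  rw [mem_unitDisc_iff] at hc hz
  have hc' : Complex.normSq c < 1 := by rw [← Complex.sq_norm]; nlinarith [norm_nonneg c]
  have hz' : Complex.normSq z < 1 := by rw [← Complex.sq_norm]; nlinarith [norm_nonneg z]
  have := normSq_one_sub_conj_mul_sub_normSq_sub c z
  rw [← sq_lt_sq₀ (norm_nonneg _) (norm_nonneg _), Complex.sq_norm, Complex.sq_norm]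
  nlinarith

lemma one_sub_conj_mul_ne_zero {c z : ℂ} (hc : c ∈ unitDisc) (hz : z ∈ unitDisc) :
    1 - conj c * z ≠ 0 :=
  norm_pos_iff.1 ((norm_nonneg _).trans_lt (norm_sub_lt_norm_one_sub_conj_mul hc hz))

lemma norm_mobius (c z : ℂ) : ‖mobius c z‖ = ‖z - c‖ / ‖1 - conj c * z‖ := norm_div _ _

lemma norm_mobius_comm (c z : ℂ) : ‖mobius c z‖ = ‖mobius z c‖ := by
  have : ‖1 - conj c * z‖ = ‖1 - conj z * c‖ := by
    rw [← Complex.norm_conj]; simp [mul_comm]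
  rw [norm_mobius, norm_mobius, norm_sub_rev, this]

lemma norm_mobius_lt_one {c z : ℂ} (hc : c ∈ unitDisc) (hz : z ∈ unitDisc) :
    ‖mobius c z‖ < 1 := by
  have h := norm_sub_lt_norm_one_sub_conj_mul hc hz
  rwa [norm_mobius, div_lt_one ((norm_nonneg _).trans_lt h)]

lemma mapsTo_mobius {c : ℂ} (hc : c ∈ unitDisc) : MapsTo (mobius c) unitDisc unitDisc :=
  fun _ hz => mem_unitDisc_iff.2 (norm_mobius_lt_one hc hz)

lemma differentiableOn_mobius {c : ℂ} (hc : c ∈ unitDisc) :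
    DifferentiableOn ℂ (mobius c) unitDisc := fun _ hz =>
  ((differentiableAt_id.sub_const c).div ((differentiableAt_id.const_mul _).const_sub 1)
    (one_sub_conj_mul_ne_zero hc hz)).differentiableWithinAt

lemma mobius_self (c : ℂ) : mobius c c = 0 := by simp [mobius]

lemma mobius_neg_zero (c : ℂ) : mobius (-c) 0 = c := by simp [mobius]

lemma mobius_neg_mobius {c z : ℂ} (hc : c ∈ unitDisc) (hz : z ∈ unitDisc) :
    mobius (-c) (mobius c z) = z := by
  have hcz := one_sub_conj_mul_ne_zero hc hz
  have e₁ : mobius c z + c = z * (1 - conj c * c) / (1 - conj c * z) := by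
    rw [mobius, div_add' _ _ _ hcz]; ring
  have e₂ : 1 + conj c * mobius c z = (1 - conj c * c) / (1 - conj c * z) := by
    rw [mobius, mul_div_assoc', one_add_div hcz]; ring
  rw [mobius, map_neg, sub_neg_eq_add, neg_mul, sub_neg_eq_add, e₁, e₂,
    div_div_div_cancel_right₀ hcz, mul_div_cancel_right₀ _ (one_sub_conj_mul_ne_zero hc hc)]

lemma poincareDist_eq_log_norm_mobius (ζ₁ ζ₂ : ℂ) :
    poincareDist ζ₁ ζ₂ = Real.log ((1 + ‖mobius ζ₂ ζ₁‖) / (1 - ‖mobius ζ₂ ζ₁‖)) := by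
  rw [norm_mobius]; rfl

lemma poincareDist_comm (ζ₁ ζ₂ : ℂ) : poincareDist ζ₁ ζ₂ = poincareDist ζ₂ ζ₁ := by
  rw [poincareDist_eq_log_norm_mobius, poincareDist_eq_log_norm_mobius, norm_mobius_comm]

lemma log_one_add_div_one_sub_le {m₁ m₂ : ℝ} (h₀ : 0 ≤ m₁) (h₁₂ : m₁ ≤ m₂) (h₂ : m₂ < 1) :
    Real.log ((1 + m₁) / (1 - m₁)) ≤ Real.log ((1 + m₂) / (1 - m₂)) := by
  apply Real.log_le_log (by apply div_pos <;> linarith)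
  rw [div_le_div_iff₀ (by linarith) (by linarith)]
  nlinarith

theorem poincareDist_le_of_mapsTo {f : ℂ → ℂ} (hd : DifferentiableOn ℂ f unitDisc)
    (hm : MapsTo f unitDisc unitDisc) {ζ₁ ζ₂ : ℂ} (h₁ : ζ₁ ∈ unitDisc) (h₂ : ζ₂ ∈ unitDisc) :
    poincareDist (f ζ₁) (f ζ₂) ≤ poincareDist ζ₁ ζ₂ := by
  have h₂' : -ζ₂ ∈ unitDisc := by simpa [mem_unitDisc_iff] using h₂
  set g := mobius (f ζ₂) ∘ f ∘ mobius (-ζ₂)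
  have hM := mapsTo_mobius h₂'
  have hgm : MapsTo g unitDisc unitDisc := (mapsTo_mobius (hm h₂)).comp (hm.comp hM)
  have hgd : DifferentiableOn ℂ g unitDisc :=
    (differentiableOn_mobius (hm h₂)).comp (hd.comp (differentiableOn_mobius h₂') hM) (hm.comp hM)
  have hg0 : g 0 = 0 := by simp [g, mobius_neg_zero, mobius_self]
  have hschwarz := Complex.dist_le_dist_of_mapsTo_ball hgd
    (by rw [hg0]; exact hgm.mono_right ball_subset_closedBall) (mapsTo_mobius h₂ h₁)
  simp only [hg0, dist_zero_right, g, Function.comp_apply, mobius_neg_mobius h₂ h₁] at hschwarz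
  rw [poincareDist_eq_log_norm_mobius, poincareDist_eq_log_norm_mobius]
  exact log_one_add_div_one_sub_le (norm_nonneg _) hschwarz (norm_mobius_lt_one h₂ h₁)

lemma poincareDist_zero_ofReal {t : ℝ} (h₀ : 0 ≤ t) :
    poincareDist 0 t = Real.log ((1 + t) / (1 - t)) := by
  simp [poincareDist, abs_of_nonneg h₀]

lemma poincareDist_ofReal_ofReal {σ t : ℝ} (h₀ : 0 ≤ σ) (hσt : σ ≤ t) (h₁ : t < 1) :
    poincareDist σ t = poincareDist 0 t - poincareDist 0 σ := by
  have hm : ‖(σ : ℂ) - t‖ / ‖1 - conj (t : ℂ) * σ‖ = (t - σ) / (1 - t * σ) := by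
    rw [Complex.conj_ofReal, ← Complex.ofReal_sub, ← Complex.ofReal_mul, ← Complex.ofReal_one,
      ← Complex.ofReal_sub, Complex.norm_real, Complex.norm_real, Real.norm_eq_abs,
      Real.norm_eq_abs, abs_of_nonpos (by linarith), abs_of_pos (by nlinarith)]
    ring
  have hden : 0 < 1 - t * σ := by nlinarith
  rw [poincareDist_zero_ofReal (h₀.trans hσt), poincareDist_zero_ofReal h₀,
    poincareDist, hm, ← Real.log_div (div_pos (by linarith) (by linarith)).ne'
      (div_pos (by linarith) (by linarith)).ne']
  congr 1
  have e₁ : 1 + (t - σ) / (1 - t * σ) = (1 + t) * (1 - σ) / (1 - t * σ) := by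
    field_simp; ring
  have e₂ : 1 - (t - σ) / (1 - t * σ) = (1 - t) * (1 + σ) / (1 - t * σ) := by
    field_simp; ring
  have h1t : 1 - t ≠ 0 := by linarith
  have h1σ : 1 + σ ≠ 0 := by linarith
  have h1σ' : 1 - σ ≠ 0 := by linarith
  rw [e₁, e₂]
  field_simp

lemma poincareDist_zero_eventuallyEq :
    (fun t : ℝ => poincareDist 0 t) =ᶠ[𝓝[<] 1] fun t => Real.log ((1 + t) / (1 - t)) := by
  filter_upwards [Ioo_mem_nhdsLT zero_lt_one] with t ht
  exact poincareDist_zero_ofReal ht.1.le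

lemma tendsto_one_add_nhdsLT_one : Tendsto (fun t : ℝ => 1 + t) (𝓝[<] 1) (𝓝 2) := by
  convert ((continuous_const_add (1 : ℝ)).tendsto 1).mono_left nhdsWithin_le_nhds
  norm_num

lemma tendsto_poincareDist_zero_atTop :
    Tendsto (fun t : ℝ => poincareDist 0 t) (𝓝[<] 1) atTop := by
  refine (Real.tendsto_log_atTop.comp ?_).congr' poincareDist_zero_eventuallyEq.symm
  have hden : Tendsto (fun t : ℝ => 1 - t) (𝓝[<] 1) (𝓝[>] 0) := by
    refine tendsto_nhdsWithin_of_tendsto_nhds_of_eventually_within _ ?_ ?_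
    · simpa using ((continuous_sub_left (1 : ℝ)).tendsto 1).mono_left nhdsWithin_le_nhds
    · filter_upwards [self_mem_nhdsWithin] with t ht
      simpa using ht
  simpa [div_eq_mul_inv] using
    tendsto_one_add_nhdsLT_one.pos_mul_atTop two_pos (tendsto_inv_nhdsGT_zero.comp hden)

/-! ### The Cayley transform of the left half-plane -/

def cayley (u : ℂ) : ℂ := (1 + u) / (1 - u)

lemma one_sub_ne_zero_of_re_neg {u : ℂ} (hu : u.re < 0) : 1 - u ≠ 0 := by
  intro h
  have := congrArg Complex.re h
  simp only [Complex.sub_re, Complex.one_re, Complex.zero_re] at this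
  linarith

lemma ne_zero_of_re_neg {u : ℂ} (hu : u.re < 0) : u ≠ 0 := by
  rintro rfl
  simp at hu

lemma norm_cayley_lt_one {u : ℂ} (hu : u.re < 0) : ‖cayley u‖ < 1 := by
  have hsq : Complex.normSq (1 - u) - Complex.normSq (1 + u) = -4 * u.re := by
    simp only [Complex.normSq_apply, Complex.add_re, Complex.add_im, Complex.sub_re,
      Complex.sub_im, Complex.one_re, Complex.one_im]
    ring
  rw [cayley, norm_div, div_lt_one (norm_pos_iff.2 (one_sub_ne_zero_of_re_neg hu)),
    ← sq_lt_sq₀ (norm_nonneg _) (norm_nonneg _), Complex.sq_norm, Complex.sq_norm]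
  linarith

lemma differentiableAt_cayley {u : ℂ} (hu : u.re < 0) : DifferentiableAt ℂ cayley u :=
  (differentiableAt_id.const_add 1).div (differentiableAt_id.const_sub 1)
    (one_sub_ne_zero_of_re_neg hu)

lemma normSq_add_conj_sub_normSq_sub (u v : ℂ) :
    Complex.normSq (u + conj v) - Complex.normSq (u - v) = 4 * u.re * v.re := by
  simp only [Complex.normSq_apply, Complex.add_re, Complex.add_im, Complex.sub_re,
    Complex.sub_im, Complex.conj_re, Complex.conj_im]
  ring

lemma norm_sub_lt_norm_add_conj {u v : ℂ} (hu : u.re < 0) (hv : v.re < 0) :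
    ‖u - v‖ < ‖u + conj v‖ := by
  have := normSq_add_conj_sub_normSq_sub u v
  rw [← sq_lt_sq₀ (norm_nonneg _) (norm_nonneg _), Complex.sq_norm, Complex.sq_norm]
  nlinarith

lemma norm_mobius_cayley {u v : ℂ} (hu : u.re < 0) (hv : v.re < 0) :
    ‖mobius (cayley v) (cayley u)‖ = ‖u - v‖ / ‖u + conj v‖ := by
  have hu₁ := one_sub_ne_zero_of_re_neg hu
  have hv₂ : 1 - conj v ≠ 0 := by
    rw [← map_one conj, ← map_sub]; exact (map_ne_zero _).2 (one_sub_ne_zero_of_re_neg hv)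
  have huv : u + conj v ≠ 0 := ne_zero_of_re_neg <| by
    simp only [Complex.add_re, Complex.conj_re]; linarith
  have hv₁ := one_sub_ne_zero_of_re_neg hv
  have hnum : cayley u - cayley v = 2 * (u - v) / ((1 - u) * (1 - v)) := by
    unfold cayley; field_simp; ring
  have hden :
      1 - conj (cayley v) * cayley u = -2 * (u + conj v) / ((1 - conj v) * (1 - u)) := by
    simp only [cayley, map_div₀, map_add, map_sub, map_one]
    field_simp; ring
  have hnorm : ‖1 - conj v‖ = ‖1 - v‖ := by rw [← Complex.norm_conj]; simp
  rw [norm_mobius, hnum, hden]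
  simp only [norm_div, norm_mul, norm_neg, hnorm, Complex.norm_ofNat]
  field_simp

lemma poincareDist_cayley {u v : ℂ} (hu : u.re < 0) (hv : v.re < 0) :
    poincareDist (cayley u) (cayley v) =
      Real.log ((‖u + conj v‖ + ‖u - v‖) ^ 2 / (4 * u.re * v.re)) := by
  have hlt := norm_sub_lt_norm_add_conj hu hv
  have hpos : 0 < ‖u + conj v‖ := (norm_nonneg _).trans_lt hlt
  have hprod : (‖u + conj v‖ - ‖u - v‖) * (‖u + conj v‖ + ‖u - v‖) = 4 * u.re * v.re := by
    rw [← normSq_add_conj_sub_normSq_sub, ← Complex.sq_norm, ← Complex.sq_norm]; ring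
  rw [poincareDist_eq_log_norm_mobius, norm_mobius_cayley hu hv, ← hprod]
  congr 1
  field_simp

/-! ### Asymptotics in the left half-plane -/

lemma eventuallyEq_one_sub_smul_inv_smul (v : ℝ → ℂ) :
    v =ᶠ[𝓝[<] 1] fun t => (1 - t) • (1 - t)⁻¹ • v t := by
  filter_upwards [self_mem_nhdsWithin] with t ht
  exact (smul_inv_smul₀ (sub_ne_zero.2 (ne_of_gt ht)) (v t)).symm

/-- The horofunction of the left half-plane (with the Poincaré distance transported by `cayley`)
at the boundary point `0`, normalized to vanish at `-1`. -/
def halfPlaneHorofunction (u : ℂ) : ℝ := Real.log (‖u‖ ^ 2 / -u.re)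

lemma sq_norm_div_neg_re_pos {u : ℂ} (hu : u.re < 0) : 0 < ‖u‖ ^ 2 / -u.re :=
  div_pos (pow_pos (norm_pos_iff.2 (ne_zero_of_re_neg hu)) 2) (neg_pos.2 hu)

lemma halfPlaneHorofunction_real_smul {r : ℝ} (hr : 0 < r) {u : ℂ} (hu : u.re < 0) :
    halfPlaneHorofunction (r • u) = Real.log r + halfPlaneHorofunction u := by
  rw [halfPlaneHorofunction, halfPlaneHorofunction,
    ← Real.log_mul hr.ne' (sq_norm_div_neg_re_pos hu).ne']
  congr 1
  rw [Complex.smul_re, norm_smul, Real.norm_of_nonneg hr.le, smul_eq_mul]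
  field_simp

lemma halfPlaneHorofunction_neg_ofReal {c : ℝ} (hc : 0 < c) :
    halfPlaneHorofunction (-c) = Real.log c := by
  rw [halfPlaneHorofunction, norm_neg, Complex.norm_real, Real.norm_of_nonneg hc.le]
  simp only [Complex.neg_re, Complex.ofReal_re, neg_neg]
  field_simp

lemma continuousAt_halfPlaneHorofunction {u : ℂ} (hu : u.re < 0) :
    ContinuousAt halfPlaneHorofunction u :=
  ((continuous_norm.pow 2).continuousAt.div Complex.continuous_re.neg.continuousAt
    (neg_ne_zero.2 hu.ne)).log (sq_norm_div_neg_re_pos hu).ne'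

lemma tendsto_log_add_halfPlaneHorofunction {v : ℝ → ℂ} {c : ℝ} (hc : 0 < c)
    (hv : Tendsto (fun t => (1 - t)⁻¹ • v t) (𝓝[<] 1) (𝓝 (-c))) :
    Tendsto (fun t => Real.log ((1 + t) / (1 - t)) + halfPlaneHorofunction (v t)) (𝓝[<] 1)
      (𝓝 (Real.log (2 * c))) := by
  have hre : ∀ᶠ t in 𝓝[<] (1 : ℝ), ((1 - t)⁻¹ • v t).re < 0 :=
    ((Complex.continuous_re.tendsto _).comp hv).eventually_lt_const (by simpa using hc)
  have hlim : Tendsto (fun t => Real.log (1 + t) + halfPlaneHorofunction ((1 - t)⁻¹ • v t)) (𝓝[<] 1)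
      (𝓝 (Real.log 2 + Real.log c)) := by
    refine (tendsto_one_add_nhdsLT_one.log two_ne_zero).add ?_
    rw [← halfPlaneHorofunction_neg_ofReal hc]
    exact (continuousAt_halfPlaneHorofunction (by simpa using hc)).tendsto.comp hv
  rw [Real.log_mul two_ne_zero hc.ne']
  refine hlim.congr' ?_
  filter_upwards [hre, eventuallyEq_one_sub_smul_inv_smul v, Ioo_mem_nhdsLT zero_lt_one]
    with t hWt hvt ht
  conv_rhs => rw [hvt]
  rw [halfPlaneHorofunction_real_smul (by linarith [ht.2]) hWt,
    Real.log_div (by linarith [ht.1]) (by linarith [ht.2])]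
  ring

lemma tendsto_poincareDist_cayley_sub_log {u : ℂ} (hu : u.re < 0) {v : ℝ → ℂ} {c : ℝ}
    (hc : 0 < c) (hv : Tendsto (fun t => (1 - t)⁻¹ • v t) (𝓝[<] 1) (𝓝 (-c))) :
    Tendsto (fun t => poincareDist (cayley u) (cayley (v t)) - Real.log ((1 + t) / (1 - t)))
      (𝓝[<] 1) (𝓝 (halfPlaneHorofunction u - Real.log (2 * c))) := by
  set W := fun t : ℝ => (1 - t)⁻¹ • v t
  have hWre : Tendsto (fun t => (W t).re) (𝓝[<] 1) (𝓝 (-c)) := by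
    simpa [W, Function.comp_def] using (Complex.continuous_re.tendsto _).comp hv
  have hv₀ : Tendsto v (𝓝[<] 1) (𝓝 0) := by
    have h₁ : Tendsto (fun t : ℝ => 1 - t) (𝓝[<] 1) (𝓝 0) := by
      simpa using ((continuous_sub_left (1 : ℝ)).tendsto 1).mono_left nhdsWithin_le_nhds
    simpa using (h₁.smul hv).congr' (eventuallyEq_one_sub_smul_inv_smul v).symm
  have hsum : Tendsto (fun t => ‖u + conj (v t)‖ + ‖u - v t‖) (𝓝[<] 1) (𝓝 (2 * ‖u‖)) := by
    have h₁ : Tendsto (fun t => u + conj (v t)) (𝓝[<] 1) (𝓝 u) := by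
      simpa using tendsto_const_nhds.add ((Complex.continuous_conj.tendsto 0).comp hv₀)
    have h₂ : Tendsto (fun t => u - v t) (𝓝[<] 1) (𝓝 u) := by
      simpa using tendsto_const_nhds.sub hv₀
    simpa [two_mul] using h₁.norm.add h₂.norm
  have hden : 0 < 4 * u.re * -c * 2 := by nlinarith
  have hfrac : Tendsto
      (fun t => (‖u + conj (v t)‖ + ‖u - v t‖) ^ 2 / (4 * u.re * (W t).re * (1 + t)))
      (𝓝[<] 1) (𝓝 ((2 * ‖u‖) ^ 2 / (4 * u.re * -c * 2))) :=
    (hsum.pow 2).div ((hWre.const_mul _).mul tendsto_one_add_nhdsLT_one) hden.ne'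
  have hu₀ : u ≠ 0 := ne_zero_of_re_neg hu
  have hlim : Real.log ((2 * ‖u‖) ^ 2 / (4 * u.re * -c * 2)) =
      halfPlaneHorofunction u - Real.log (2 * c) := by
    rw [halfPlaneHorofunction, ← Real.log_div (sq_norm_div_neg_re_pos hu).ne' (by positivity)]
    congr 1
    have : -u.re ≠ 0 := neg_ne_zero.2 hu.ne
    field_simp
    ring
  rw [← hlim]
  refine (hfrac.log (div_pos (by positivity) hden).ne').congr' ?_
  filter_upwards [hWre.eventually_lt_const (neg_lt_zero.2 hc),
    eventuallyEq_one_sub_smul_inv_smul v, Ioo_mem_nhdsLT zero_lt_one] with t hWt hvt ht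
  have hvre : (v t).re = (1 - t) * (W t).re := by rw [hvt, Complex.smul_re, smul_eq_mul]
  have hvt' : (v t).re < 0 := by rw [hvre]; exact mul_neg_of_pos_of_neg (by linarith [ht.2]) hWt
  have hA : 0 < ‖u + conj (v t)‖ := (norm_nonneg _).trans_lt (norm_sub_lt_norm_add_conj hu hvt')
  rw [poincareDist_cayley hu hvt', ← Real.log_div (div_pos (by positivity) (by nlinarith)).ne'
    (div_pos (by linarith [ht.1]) (by linarith [ht.2])).ne', hvre]
  congr 1
  have : 1 - t ≠ 0 := by linarith [ht.2]
  have : 1 + t ≠ 0 := by linarith [ht.1]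
  field_simp

/-! ### Radial limits from non-tangential limits of the derivative -/

section RadialAsymptotics

variable {E : Type*} [NormedAddCommGroup E] [NormedSpace ℝ E]

lemma norm_add_one_sub_smul_le {g g' : ℝ → E} {L : E} {t₀ ε t : ℝ}
    (hd : ∀ s ∈ Ioo t₀ 1, HasDerivAt g (g' s) s) (hε : ∀ s ∈ Ioo t₀ 1, ‖g' s - L‖ ≤ ε)
    (h₀ : Tendsto g (𝓝[<] 1) (𝓝 0)) (ht : t ∈ Ioo t₀ 1) :
    ‖g t + (1 - t) • L‖ ≤ ε * (1 - t) := by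
  have hmvt : ∀ s ∈ Ioo t₀ 1, ‖(g s - s • L) - (g t - t • L)‖ ≤ ε * ‖s - t‖ := fun s hs =>
    Convex.norm_image_sub_le_of_norm_hasDerivWithin_le (f := fun s => g s - s • L)
      (fun x hx => by
        simpa using ((hd x hx).fun_sub ((hasDerivAt_id x).smul_const L)).hasDerivWithinAt)
      hε (convex_Ioo t₀ 1) ht hs
  have hlim : Tendsto (fun s : ℝ => (g s - s • L) - (g t - t • L)) (𝓝[<] 1)
      (𝓝 ((0 - (1 : ℝ) • L) - (g t - t • L))) :=
    (h₀.sub (((continuous_id.smul continuous_const).tendsto 1).mono_left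
      nhdsWithin_le_nhds)).sub_const _
  have hbound : Tendsto (fun s : ℝ => ε * ‖s - t‖) (𝓝[<] 1) (𝓝 (ε * ‖1 - t‖)) :=
    (((continuous_id.sub continuous_const).norm.const_mul ε).tendsto 1).mono_left
      nhdsWithin_le_nhds
  have := le_of_tendsto_of_tendsto hlim.norm hbound (by
    filter_upwards [Ioo_mem_nhdsLT (ht.1.trans ht.2)] with s hs using hmvt s hs)
  rw [← norm_neg, Real.norm_of_nonneg (by linarith [ht.2])] at this
  rwa [show g t + (1 - t) • L = -(0 - (1 : ℝ) • L - (g t - t • L)) by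
    rw [sub_smul, one_smul]; abel]

lemma tendsto_inv_one_sub_smul_of_tendsto_deriv {g g' : ℝ → E} {L : E}
    (hd : ∀ᶠ t in 𝓝[<] 1, HasDerivAt g (g' t) t) (h₀ : Tendsto g (𝓝[<] 1) (𝓝 0))
    (hL : Tendsto g' (𝓝[<] 1) (𝓝 L)) :
    Tendsto (fun t => (1 - t)⁻¹ • g t) (𝓝[<] 1) (𝓝 (-L)) := by
  have hlo : (fun t => g t + (1 - t) • L) =o[𝓝[<] 1] fun t => 1 - t := by
    refine Asymptotics.IsLittleO.of_bound fun ε hε => ?_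
    obtain ⟨t₀, ht₀, hsub⟩ :=
      mem_nhdsLT_iff_exists_Ioo_subset.1 (hd.and (hL.eventually (closedBall_mem_nhds L hε)))
    filter_upwards [Ioo_mem_nhdsLT ht₀] with t ht
    rw [Real.norm_of_nonneg (by linarith [ht.2])]
    exact norm_add_one_sub_smul_le (fun s hs => (hsub hs).1)
      (fun s hs => by simpa [dist_eq_norm] using (hsub hs).2) h₀ ht
  have := hlo.tendsto_inv_smul_nhds_zero.sub_const L
  rw [zero_sub] at this
  refine this.congr' ?_
  filter_upwards [self_mem_nhdsWithin] with t ht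
  rw [smul_add, inv_smul_smul₀ (sub_ne_zero.2 (ne_of_gt ht)), add_sub_cancel_right]

end RadialAsymptotics

lemma tendsto_ofReal_nhdsWithin_stolzAt :
    Tendsto (fun t : ℝ => (t : ℂ)) (𝓝[<] 1) (𝓝[stolzAt 1 2] 1) := by
  refine tendsto_nhdsWithin_of_tendsto_nhds_of_eventually_within _
    ((Complex.continuous_ofReal.tendsto' 1 1 Complex.ofReal_one).mono_left
      nhdsWithin_le_nhds) ?_
  filter_upwards [Ioo_mem_nhdsLT zero_lt_one] with t ht
  refine ⟨ofReal_mem_unitDisc (by linarith [ht.1]) ht.2, ?_⟩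
  rw [← Complex.ofReal_one, ← Complex.ofReal_sub, Complex.norm_real, Complex.norm_real,
    Real.norm_of_nonneg (by linarith [ht.2]), Real.norm_of_nonneg ht.1.le]
  linarith [ht.2]

lemma tendsto_inv_one_sub_smul_of_ntLim {E : Type*} [NormedAddCommGroup E] [NormedSpace ℂ E]
    {χ : ℂ → E} {ξ : E} (ℓ : E →L[ℂ] ℂ) (hd : DifferentiableOn ℂ χ unitDisc)
    (he : HasEndpoint χ ξ) {c : ℂ} (hc : NTLim (fun ζ => ℓ (deriv χ ζ)) 1 c) :
    Tendsto (fun t : ℝ => (1 - t)⁻¹ • ℓ (χ t - ξ)) (𝓝[<] 1) (𝓝 (-c)) := by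
  refine tendsto_inv_one_sub_smul_of_tendsto_deriv (g' := fun t : ℝ => ℓ (deriv χ t)) ?_ ?_
    ((hc 2 one_lt_two).comp tendsto_ofReal_nhdsWithin_stolzAt)
  · filter_upwards [Ioo_mem_nhdsLT zero_lt_one] with t ht
    have hχ := (hd.differentiableAt (isOpen_ball.mem_nhds
      (ofReal_mem_unitDisc (by linarith [ht.1]) ht.2))).hasDerivAt
    exact (ℓ.hasFDerivAt.comp_hasDerivAt _ (hχ.sub_const ξ)).comp_ofReal
  · simpa [Function.comp_def] using (ℓ.continuous.tendsto _).comp (he.sub_const ξ)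

lemma herm_eq_innerSL {n : ℕ} (z w : En n) : herm z w = innerSL ℂ w z := by
  simp [herm, PiLp.inner_apply]

lemma tendsto_inv_one_sub_smul_herm_of_ntLim {n : ℕ} {ξ nξ : En n}
    {χ : ℂ → En n} (hd : DifferentiableOn ℂ χ unitDisc) (he : HasEndpoint χ ξ) {c : ℝ}
    (hc : NTLim (fun ζ => herm (deriv χ ζ) nξ) 1 c) :
    Tendsto (fun t : ℝ => (1 - t)⁻¹ • herm (χ t - ξ) nξ) (𝓝[<] 1) (𝓝 (-c)) := by
  simp only [herm_eq_innerSL] at hc ⊢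
  exact tendsto_inv_one_sub_smul_of_ntLim _ hd he hc

/-! ### The Kobayashi distance and horofunctions -/

/-- The hypothesis `kob D z w ≠ 0` excludes the junk value `sInf ∅ = 0`, taken when no
holomorphic disc in `D` passes through `z` and `w`. -/
lemma poincareDist_le_kob {E : Type*} [NormedAddCommGroup E] [NormedSpace ℂ E] {D : Set E}
    {g : E → ℂ} (hg : DifferentiableOn ℂ g D) (hgD : MapsTo g D unitDisc) {z w : E}
    (hk : kob D z w ≠ 0) : poincareDist (g z) (g w) ≤ kob D z w := by
  unfold kob at hk ⊢
  refine le_csInf (nonempty_iff_ne_empty.2 fun h => hk ?_) ?_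
  · rw [h, Real.sInf_empty]
  · rintro _ ⟨φ, hφd, hφD, ζ₁, h₁, ζ₂, h₂, rfl, rfl, rfl⟩
    exact poincareDist_le_of_mapsTo (hg.comp hφd hφD) (hgD.comp hφD) h₁ h₂

lemma IsOuterUnitNormal.poincareDist_cayley_le_kob {n : ℕ} {D : Set (En n)} {ξ nξ : En n}
    (hn : IsOuterUnitNormal D ξ nξ) {z w : En n} (hk : kob D z w ≠ 0) :
    poincareDist (cayley (herm (z - ξ) nξ)) (cayley (herm (w - ξ) nξ)) ≤ kob D z w := by
  refine poincareDist_le_kob (g := fun z => cayley (herm (z - ξ) nξ)) (fun z hz => ?_)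
    (fun z hz => mem_unitDisc_iff.2 (norm_cayley_lt_one (hn.2 z hz))) hk
  have hz' := hn.2 z hz
  simp only [herm_eq_innerSL] at hz' ⊢
  exact ((differentiableAt_cayley hz').comp z ((innerSL ℂ nξ).differentiableAt.comp z
    (differentiableAt_id.sub_const ξ))).differentiableWithinAt

section Geodesic

variable {E : Type*} [NormedAddCommGroup E] [NormedSpace ℂ E] {D : Set E} {χ : ℂ → E}

lemma IsComplexGeodesic.kob_zero_ofReal (hχ : IsComplexGeodesic D χ) {t : ℝ} (h₀ : -1 < t)
    (h₁ : t < 1) : kob D (χ 0) (χ t) = poincareDist 0 t :=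
  hχ.2.2 _ zero_mem_unitDisc _ (ofReal_mem_unitDisc h₀ h₁)

lemma IsComplexGeodesic.kob_ofReal_ofReal (hχ : IsComplexGeodesic D χ) {σ t : ℝ} (h₀ : 0 ≤ σ)
    (hσt : σ ≤ t) (h₁ : t < 1) : kob D (χ σ) (χ t) = poincareDist 0 t - poincareDist 0 σ := by
  rw [hχ.2.2 _ (ofReal_mem_unitDisc (by linarith) (by linarith)) _
    (ofReal_mem_unitDisc (by linarith) h₁), poincareDist_ofReal_ofReal h₀ hσt h₁]

lemma HasEndpoint.tendsto_nhdsWithin {ξ : E} (he : HasEndpoint χ ξ)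
    (hχD : MapsTo χ unitDisc D) : Tendsto (fun t : ℝ => χ t) (𝓝[<] 1) (𝓝[D] ξ) := by
  refine tendsto_nhdsWithin_of_tendsto_nhds_of_eventually_within _ he ?_
  filter_upwards [Ioo_mem_nhdsLT zero_lt_one] with t ht
  exact hχD (ofReal_mem_unitDisc (by linarith [ht.1]) ht.2)

end Geodesic

namespace IsHorofunction

variable {n : ℕ} {D : Set (En n)} {ξ p : En n} {h : En n → ℝ} {χ : ℂ → En n}

lemma tendsto_kob_sub (hh : IsHorofunction D ξ p h) (hχ : IsComplexGeodesic D χ)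
    (he : HasEndpoint χ ξ) {z : En n} (hz : z ∈ D) :
    Tendsto (fun t : ℝ => kob D z (χ t) - poincareDist 0 t) (𝓝[<] 1) (𝓝 (h z - h (χ 0))) := by
  have hpath := he.tendsto_nhdsWithin hχ.2.1
  refine (((hh z hz).comp hpath).sub ((hh _ (hχ.2.1 zero_mem_unitDisc)).comp hpath)).congr' ?_
  filter_upwards [Ioo_mem_nhdsLT zero_lt_one] with t ht
  simp only [Function.comp_apply, hχ.kob_zero_ofReal (by linarith [ht.1]) ht.2]
  ring

lemma apply_ofReal (hh : IsHorofunction D ξ p h) (hχ : IsComplexGeodesic D χ)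
    (he : HasEndpoint χ ξ) {σ : ℝ} (h₀ : 0 ≤ σ) (h₁ : σ < 1) :
    h (χ σ) = h (χ 0) - poincareDist 0 σ := by
  have hconst : Tendsto (fun t : ℝ => kob D (χ σ) (χ t) - poincareDist 0 t) (𝓝[<] 1)
      (𝓝 (-poincareDist 0 σ)) := by
    refine tendsto_const_nhds.congr' ?_
    filter_upwards [Ioo_mem_nhdsLT h₁] with t ht
    rw [hχ.kob_ofReal_ofReal h₀ ht.1.le ht.2]
    ring
  have := tendsto_nhds_unique
    (hh.tendsto_kob_sub hχ he (hχ.2.1 (ofReal_mem_unitDisc (by linarith) h₁))) hconst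
  linarith

lemma apply_zero (hh : IsHorofunction D ξ (χ 0) h) (hχ : IsComplexGeodesic D χ)
    (he : HasEndpoint χ ξ) : h (χ 0) = 0 := by
  refine tendsto_nhds_unique ((hh _ (hχ.2.1 zero_mem_unitDisc)).comp
    (he.tendsto_nhdsWithin hχ.2.1)) (tendsto_const_nhds.congr' ?_)
  filter_upwards [Ioo_mem_nhdsLT zero_lt_one] with t ht
  have ht' := ofReal_mem_unitDisc (by linarith [ht.1]) ht.2
  rw [Function.comp_apply, hχ.2.2 _ zero_mem_unitDisc _ ht', hχ.2.2 _ ht' _ zero_mem_unitDisc,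
    poincareDist_comm, sub_self]

variable {nξ : En n}

lemma halfPlaneHorofunction_sub_log_le (hh : IsHorofunction D ξ p h)
    (hn : IsOuterUnitNormal D ξ nξ) (hχ : IsComplexGeodesic D χ) (he : HasEndpoint χ ξ)
    {c : ℝ} (hc : 0 < c) (hχc : NTLim (fun ζ => herm (deriv χ ζ) nξ) 1 c) {z : En n} (hz : z ∈ D) :
    halfPlaneHorofunction (herm (z - ξ) nξ) - Real.log (2 * c) ≤ h z - h (χ 0) := by
  have hkob := hh.tendsto_kob_sub hχ he hz
  have hcayley : Tendsto (fun t : ℝ => poincareDist (cayley (herm (z - ξ) nξ))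
      (cayley (herm (χ t - ξ) nξ)) - poincareDist 0 t) (𝓝[<] 1)
      (𝓝 (halfPlaneHorofunction (herm (z - ξ) nξ) - Real.log (2 * c))) := by
    refine (tendsto_poincareDist_cayley_sub_log (hn.2 z hz) hc
      (tendsto_inv_one_sub_smul_herm_of_ntLim hχ.1 he hχc)).congr' ?_
    filter_upwards [poincareDist_zero_eventuallyEq] with t ht
    rw [ht]
  have hatTop : Tendsto (fun t : ℝ => kob D z (χ t)) (𝓝[<] 1) atTop :=
    (hkob.add_atTop tendsto_poincareDist_zero_atTop).congr fun t => sub_add_cancel _ _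
  refine le_of_tendsto_of_tendsto hcayley hkob ?_
  filter_upwards [hatTop.eventually_ne_atTop 0] with t ht
  exact sub_le_sub_right (hn.poincareDist_cayley_le_kob ht) _

lemma log_div_le_sub (hh : IsHorofunction D ξ p h) (hn : IsOuterUnitNormal D ξ nξ)
    {φ ψ : ℂ → En n} (hφ : IsComplexGeodesic D φ) (hφe : HasEndpoint φ ξ) {a : ℝ} (ha : 0 < a)
    (hφa : NTLim (fun ζ => herm (deriv φ ζ) nξ) 1 a) (hψ : IsComplexGeodesic D ψ)
    (hψe : HasEndpoint ψ ξ) {b : ℝ} (hb : 0 < b)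
    (hψb : NTLim (fun ζ => herm (deriv ψ ζ) nξ) 1 b) :
    Real.log (b / a) ≤ h (ψ 0) - h (φ 0) := by
  have hlim := tendsto_log_add_halfPlaneHorofunction hb
    (tendsto_inv_one_sub_smul_herm_of_ntLim hψ.1 hψe hψb)
  have hlog : Real.log (b / a) = Real.log (2 * b) - Real.log (2 * a) := by
    rw [Real.log_mul two_ne_zero hb.ne', Real.log_mul two_ne_zero ha.ne',
      Real.log_div hb.ne' ha.ne']
    ring
  rw [hlog]
  refine le_of_tendsto (hlim.sub_const _) ?_
  filter_upwards [poincareDist_zero_eventuallyEq, Ioo_mem_nhdsLT zero_lt_one] with σ hσ hσ₁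
  have hψσ := hh.apply_ofReal hψ hψe hσ₁.1.le hσ₁.2
  have hbound := hh.halfPlaneHorofunction_sub_log_le hn hφ hφe ha hφa
    (hψ.2.1 (ofReal_mem_unitDisc (by linarith [hσ₁.1]) hσ₁.2))
  rw [← hσ]
  linarith

end IsHorofunction

theorem stmt0_general {n : ℕ} (D : Set (En n))
    (ξ : En n)
    (nξ : En n) (hn : IsOuterUnitNormal D ξ nξ)
    (φ ψ : ℂ → En n) (hφ : IsComplexGeodesic D φ) (hψ : IsComplexGeodesic D ψ)
    (hφe : HasEndpoint φ ξ) (hψe : HasEndpoint ψ ξ)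
    (a b : ℝ) (ha : 0 < a) (hb : 0 < b)
    (hφa : NTLim (fun ζ => herm (deriv φ ζ) nξ) 1 (a : ℂ))
    (hψb : NTLim (fun ζ => herm (deriv ψ ζ) nξ) 1 (b : ℂ))
    (h : En n → ℝ) (hh : IsHorofunction D ξ (φ 0) h) :
    h (ψ 0) = Real.log (b / a) ∧ (φ 0 = ψ 0 → a = b) := by
  have hψφ := hh.log_div_le_sub hn hφ hφe ha hφa hψ hψe hb hψb
  have hφψ := hh.log_div_le_sub hn hψ hψe hb hψb hφ hφe ha hφa
  rw [← inv_div, Real.log_inv] at hφψ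
  have hdiff : h (ψ 0) - h (φ 0) = Real.log (b / a) := by linarith
  refine ⟨by linarith [hh.apply_zero hφ hφe], fun h₀ => ?_⟩
  rw [h₀, sub_self] at hdiff
  exact ((div_eq_one_iff_eq ha.ne').1
    (Real.eq_one_of_pos_of_log_eq_zero (div_pos hb ha) hdiff.symm)).symm

/-- if `φ, ψ` are complex geodesics with endpoint a locally finite type point
`ξ ∈ ∂D`, then `h_{ξ,φ(0)}(ψ(0)) = log(ψ'_N(1)/φ'_N(1))`; in particular `φ(0) = ψ(0)`
implies `φ'_N(1) = ψ'_N(1)`. -/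
theorem stmt0 {n : ℕ} (D : Set (En n)) (hD : IsCProperConvex D)
    (ξ : En n) (hξ : IsLocallyFiniteType D ξ)
    (nξ : En n) (hn : IsOuterUnitNormal D ξ nξ)
    (φ ψ : ℂ → En n) (hφ : IsComplexGeodesic D φ) (hψ : IsComplexGeodesic D ψ)
    (hφe : HasEndpoint φ ξ) (hψe : HasEndpoint ψ ξ)
    (a b : ℝ) (ha : 0 < a) (hb : 0 < b)
    (hφa : NTLim (fun ζ => herm (deriv φ ζ) nξ) 1 (a : ℂ))
    (hψb : NTLim (fun ζ => herm (deriv ψ ζ) nξ) 1 (b : ℂ))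
    (h : En n → ℝ) (hh : IsHorofunction D ξ (φ 0) h) :
    h (ψ 0) = Real.log (b / a) ∧ (φ 0 = ψ 0 → a = b) :=
  stmt0_general D ξ nξ hn φ ψ hφ hψ hφe hψe a b ha hb hφa hψb h hh
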